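/- The structure constants of the Knutson–Tao basis are integral: for any two members ξ_a and ξ_b of the family {ξ⁰} ∪ {ξ⁺_q : 1 ≤ q ≤ m} ∪ {ξ⁻_q : 1 ≤ q ≤ m}, there exist polynomials h₀ and h_{q,1}, h_{q,2} (1 ≤ q ≤ m) lying in the subring ℤ[α,δ] ⊆ R of polynomials with integer coefficients such that ξ_a(t)·ξ_b(t) = h₀·ξ⁰(t) + Σ_{q=1}^{m} ( h_{q,1}·ξ⁺_q(t) + h_{q,2}·ξ⁻_q(t) ) for all t ∈ V_m. -/

import Mathlib

noncomputable section

open Finset MvPolynomial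

/-- The coefficient ring `R = ℚ[α,δ]`, realized as polynomials in two variables. -/
abbrev Rpoly : Type := MvPolynomial (Fin 2) ℚ

/-- The variable `α`. -/
def va : Rpoly := X 0

/-- The variable `δ`. -/
def vd : Rpoly := X 1

/-- `P⁻(a,b) = ∏_{k=a}^{b} (−α + k·δ)`. -/
def Pneg (a b : ℤ) : Rpoly :=
  ∏ k ∈ Finset.Icc a b, (-va + MvPolynomial.C (k : ℚ) * vd)

/-- `P⁺(a,b) = ∏_{k=a}^{b} (α + k·δ)`. -/
def Ppos (a b : ℤ) : Rpoly :=
  ∏ k ∈ Finset.Icc a b, (va + MvPolynomial.C (k : ℚ) * vd)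

/-- Binomial coefficient `C(n,q)` (all uses have `n ≥ 0`). -/
def B (n : ℤ) (q : ℕ) : ℚ := (n.toNat).choose q

/-- The Knutson–Tao class `ξ⁺_q = ξ(m+q, m−q)`, as a function on vertices `t`
(the vertex `t` encodes the pair `(m+t, m−t)`). -/
def xiP (m : ℤ) (q : ℕ) (t : ℤ) : Rpoly :=
  if (q : ℤ) ≤ t ∧ t ≤ m then
    MvPolynomial.C (B (⌈((t : ℚ) - (q : ℚ) + 1) / 2⌉ + q - 1) q) *
      Pneg (⌈((t : ℚ) - (q : ℚ) + 1) / 2⌉ - 1) (⌈((t : ℚ) - (q : ℚ) + 1) / 2⌉ + q - 2)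
  else if -m ≤ t ∧ t ≤ -((q : ℤ) + 1) then
    MvPolynomial.C (B (⌈(-(t : ℚ) - (q : ℚ)) / 2⌉ + q - 1) q) *
      Ppos (⌈(-(t : ℚ) - (q : ℚ)) / 2⌉ + 1) (⌈(-(t : ℚ) - (q : ℚ)) / 2⌉ + q)
  else 0

/-- The Knutson–Tao class `ξ⁻_q = ξ(m−q, m+q)`. -/
def xiM (m : ℤ) (q : ℕ) (t : ℤ) : Rpoly :=
  if (q : ℤ) + 1 ≤ t ∧ t ≤ m then
    MvPolynomial.C (B (⌈((t : ℚ) - (q : ℚ)) / 2⌉ + q - 1) q) *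
      Pneg (⌈((t : ℚ) - (q : ℚ)) / 2⌉) (⌈((t : ℚ) - (q : ℚ)) / 2⌉ + q - 1)
  else if -m ≤ t ∧ t ≤ -(q : ℤ) then
    MvPolynomial.C (B (⌈(-(t : ℚ) - (q : ℚ) + 1) / 2⌉ + q - 1) q) *
      Ppos (⌈(-(t : ℚ) - (q : ℚ) + 1) / 2⌉) (⌈(-(t : ℚ) - (q : ℚ) + 1) / 2⌉ + q - 1)
  else 0

/-- The weight of the vertex `t`: `w(t) = ((1−2t)/2)·α + (t(t−1)/2)·δ`. -/
def w (t : ℤ) : Rpoly :=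
  MvPolynomial.C ((1 - 2 * (t : ℚ)) / 2) * va +
    MvPolynomial.C (((t : ℚ) * ((t : ℚ) - 1)) / 2) * vd

/-!
Both factors are integral GKM classes on the moment graph with vertices `-m, …, m`, in which
`t` and `t'` with `t + t' = 2c + 1` are joined by an edge labelled `α - cδ`; hence so is their
product, and it remains to see that every integral GKM class `f` is an integral combination of
the Knutson–Tao classes. Order the vertices `0, 1, -1, 2, -2, …`. The class attached to the
`n`-th vertex (`1`, `ξ⁺_q` at `q`, `ξ⁻_q` at `-q`) vanishes on the earlier vertices and takes,
up to sign, the value `∏ (α - cδ)` over the edges to earlier vertices. If `f` vanishes on the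
first `n` vertices, the GKM condition makes `f` at the `n`-th vertex divisible by this product
of pairwise non-associated primes; the product is monic in `α` over `ℤ[δ]`, so the quotient has
integer coefficients, and subtracting that multiple of the basis class kills one more vertex.

The GKM property of `ξ⁺_q` is checked by substituting `α = cδ`, which turns every value into a
product of two rising factorials; `ξ⁻_q` is the image of `ξ⁺_q` under `t ↦ -t`, `α ↦ -α - δ`.
-/

lemma Int.ceil_intCast_div_two (n : ℤ) : ⌈(n : ℚ) / 2⌉ = -(-n / 2) := by
  exact_mod_cast Rat.ceil_intCast_div_natCast n 2

lemma Finset.prod_Icc_eq_prod_range {M : Type*} [CommMonoid M] (a : ℤ) (q : ℕ) (g : ℤ → M) :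
    ∏ k ∈ Icc a (a + q - 1), g k = ∏ i ∈ range q, g (a + i) := by
  have h : Icc a (a + q - 1) = (range q).image fun i : ℕ => a + i := by
    ext k
    simp only [mem_Icc, mem_image, mem_range]
    exact ⟨fun hk => ⟨(k - a).toNat, by omega, by omega⟩, fun ⟨i, hi, hik⟩ => by omega⟩
  rw [h, prod_image fun i _ j _ hij => by simpa using hij]

lemma ascPochhammer_eval_eq_prod_range {R : Type*} [CommSemiring R] (q : ℕ) (x : R) :
    (ascPochhammer R q).eval x = ∏ i ∈ range q, (x + i) := by
  induction q with
  | zero => simp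
  | succ q ih => rw [ascPochhammer_succ_eval, ih, prod_range_succ]

def rising (q : ℕ) (x : ℤ) : ℚ := (ascPochhammer ℚ q).eval (x : ℚ)

lemma rising_one_sub_sub (q : ℕ) (x : ℤ) : rising q (1 - q - x) = (-1) ^ q * rising q x := by
  rw [rising, rising, show ((1 - q - x : ℤ) : ℚ) = -((x : ℚ) + q - 1) by push_cast; ring,
    ascPochhammer_eval_neg_eq_descPochhammer, descPochhammer_eval_eq_ascPochhammer]
  ring_nf

lemma rising_eq_zero {q : ℕ} {x : ℤ} (h₁ : 1 - q ≤ x) (h₂ : x ≤ 0) : rising q x = 0 := by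
  rw [rising, ascPochhammer_eval_eq_zero_iff]
  exact ⟨(-x).toNat, by omega, by exact_mod_cast Int.toNat_of_nonneg (neg_nonneg.mpr h₂)⟩

lemma B_eq_rising_div {u : ℤ} (hu : 1 ≤ u) (q : ℕ) :
    B (u + q - 1) q = rising q u / q.factorial := by
  obtain ⟨n, rfl⟩ : ∃ n : ℕ, u = n + 1 := ⟨(u - 1).toNat, by omega⟩
  have hq : (q.factorial : ℚ) ≠ 0 := by positivity
  rw [B, show ((n : ℤ) + 1 + q - 1).toNat = n + q by omega, rising, eq_div_iff hq,
    show (((n : ℤ) + 1 : ℤ) : ℚ) = ((n + 1 : ℕ) : ℚ) by push_cast; ring,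
    ascPochhammer_nat_eq_natCast_ascFactorial, Nat.ascFactorial_eq_factorial_mul_choose]
  push_cast
  ring

def edgeLabel (c : ℤ) : Rpoly := va - MvPolynomial.C (c : ℚ) * vd

def substAlpha (c : ℤ) : Rpoly →ₐ[ℚ] Rpoly := aeval ![MvPolynomial.C (c : ℚ) * vd, vd]

lemma substAlpha_C (c : ℤ) (a : ℚ) : substAlpha c (MvPolynomial.C a) = MvPolynomial.C a :=
  (substAlpha c).commutes a

lemma substAlpha_va (c : ℤ) : substAlpha c va = MvPolynomial.C (c : ℚ) * vd := by
  simp [substAlpha, va]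

lemma substAlpha_vd (c : ℤ) : substAlpha c vd = vd := by
  simp [substAlpha, vd]

lemma edgeLabel_dvd_sub_substAlpha (c : ℤ) (f : Rpoly) : edgeLabel c ∣ f - substAlpha c f := by
  set I : Ideal Rpoly := Ideal.span {edgeLabel c}
  have h : (Ideal.Quotient.mkₐ ℚ I).comp (substAlpha c) = Ideal.Quotient.mkₐ ℚ I := by
    refine MvPolynomial.algHom_ext fun i => ?_
    fin_cases i
    · refine (Ideal.Quotient.eq.mpr ?_).symm
      show va - substAlpha c va ∈ I
      rw [substAlpha_va]
      exact Ideal.mem_span_singleton_self _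
    · exact congrArg _ (substAlpha_vd c)
  exact Ideal.mem_span_singleton.mp (Ideal.Quotient.eq.mp (AlgHom.congr_fun h f).symm)

lemma edgeLabel_dvd_sub_of_substAlpha_eq {c : ℤ} {x y : Rpoly}
    (h : substAlpha c x = substAlpha c y) : edgeLabel c ∣ x - y := by
  rw [show x - y = (x - substAlpha c x) - (y - substAlpha c y) by rw [h]; ring]
  exact dvd_sub (edgeLabel_dvd_sub_substAlpha c x) (edgeLabel_dvd_sub_substAlpha c y)

lemma substAlpha_Pneg (c a : ℤ) (q : ℕ) :
    substAlpha c (Pneg a (a + q - 1)) = MvPolynomial.C (rising q (a - c)) * vd ^ q := by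
  rw [Pneg, map_prod, prod_Icc_eq_prod_range, rising, ascPochhammer_eval_eq_prod_range, map_prod,
    show vd ^ q = vd ^ #(range q) by rw [card_range], prod_mul_pow_card]
  refine prod_congr rfl fun i _ => ?_
  simp only [map_add, map_neg, map_mul, map_natCast, map_intCast, substAlpha_va, substAlpha_vd]
  push_cast
  ring

lemma substAlpha_Ppos (c a : ℤ) (q : ℕ) :
    substAlpha c (Ppos a (a + q - 1)) = MvPolynomial.C (rising q (a + c)) * vd ^ q := by
  rw [Ppos, map_prod, prod_Icc_eq_prod_range, rising, ascPochhammer_eval_eq_prod_range, map_prod,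
    show vd ^ q = vd ^ #(range q) by rw [card_range], prod_mul_pow_card]
  refine prod_congr rfl fun i _ => ?_
  simp only [map_add, map_mul, map_natCast, map_intCast, substAlpha_va, substAlpha_vd]
  push_cast
  ring

lemma substAlpha_xiP_of_le {m : ℤ} {q : ℕ} {t : ℤ} (c : ℤ) (hqt : q ≤ t) (htm : t ≤ m) :
    substAlpha c (xiP m q t) = MvPolynomial.C
      (rising q ((t - q) / 2 + 1) * rising q ((t - q) / 2 - c) / q.factorial) * vd ^ q := by
  have hu : ⌈((t : ℚ) - q + 1) / 2⌉ = (t - q) / 2 + 1 := by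
    rw [show (t : ℚ) - q + 1 = ((t - q + 1 : ℤ) : ℚ) by push_cast; ring, Int.ceil_intCast_div_two]
    omega
  rw [xiP, if_pos ⟨hqt, htm⟩, hu, B_eq_rising_div (by omega),
    show (t - q) / 2 + 1 + q - 2 = (t - q) / 2 + 1 - 1 + q - 1 by ring, map_mul, substAlpha_Pneg,
    substAlpha_C, ← mul_assoc, ← map_mul, add_sub_cancel_right]
  ring_nf

lemma substAlpha_xiP_of_le_neg {m : ℤ} {q : ℕ} {t : ℤ} (c : ℤ) (hmt : -m ≤ t)
    (htq : t ≤ -(q + 1)) :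
    substAlpha c (xiP m q t) = MvPolynomial.C
      (rising q (-((t + q) / 2)) * rising q (1 + c - (t + q) / 2) / q.factorial) * vd ^ q := by
  have hv : ⌈(-(t : ℚ) - q) / 2⌉ = -((t + q) / 2) := by
    rw [show -(t : ℚ) - q = ((-t - q : ℤ) : ℚ) by push_cast; ring, Int.ceil_intCast_div_two]
    omega
  rw [xiP, if_neg (by omega), if_pos ⟨hmt, htq⟩, hv, B_eq_rising_div (by omega),
    show -((t + q) / 2) + q = -((t + q) / 2) + 1 + q - 1 by ring, map_mul, substAlpha_Ppos,
    substAlpha_C, ← mul_assoc, ← map_mul]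
  ring_nf

lemma xiP_eq_zero {m : ℤ} {q : ℕ} {t : ℤ} (h₁ : -q ≤ t) (h₂ : t ≤ q - 1) : xiP m q t = 0 := by
  rw [xiP, if_neg (by omega), if_neg (by omega)]

/-- After `α = cδ` both values are `rising q u * rising q u' / q!`; along an edge the pairs
`(u, u')` at the two ends agree up to order and the reflection `u ↦ 1 - q - u`, or one factor
vanishes when an end lies in the gap `[-q, q - 1]` of the support. -/
lemma substAlpha_xiP_eq_of_add_eq {m : ℤ} {q : ℕ} {t t' c : ℤ} (ht : -m ≤ t ∧ t ≤ m)
    (ht' : -m ≤ t' ∧ t' ≤ m) (hc : t + t' = 2 * c + 1) :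
    substAlpha c (xiP m q t) = substAlpha c (xiP m q t') := by
  wlog hle : t' ≤ t generalizing t t'
  · exact (this ht' ht (by omega) (by omega)).symm
  have region : ∀ s : ℤ, q ≤ s ∨ (-q ≤ s ∧ s ≤ q - 1) ∨ s ≤ -(q + 1) := by omega
  rcases region t with htq | htq | htq <;> rcases region t' with htq' | htq' | htq'
  · rw [substAlpha_xiP_of_le c htq ht.2, substAlpha_xiP_of_le c htq' ht'.2,
      show (t - q) / 2 - c = 1 - q - ((t' - q) / 2 + 1) by omega,
      show (t' - q) / 2 - c = 1 - q - ((t - q) / 2 + 1) by omega, rising_one_sub_sub,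
      rising_one_sub_sub]
    ring_nf
  · rw [substAlpha_xiP_of_le c htq ht.2, xiP_eq_zero htq'.1 htq'.2, map_zero,
      rising_eq_zero (x := (t - q) / 2 - c) (by omega) (by omega)]
    simp
  · rw [substAlpha_xiP_of_le c htq ht.2, substAlpha_xiP_of_le_neg c ht'.1 htq',
      show (t - q) / 2 - c = -((t' + q) / 2) by omega,
      show 1 + c - (t' + q) / 2 = (t - q) / 2 + 1 by omega, mul_comm (rising q _)]
  · omega
  · rw [xiP_eq_zero htq.1 htq.2, xiP_eq_zero htq'.1 htq'.2]
  · rw [xiP_eq_zero htq.1 htq.2, substAlpha_xiP_of_le_neg c ht'.1 htq', map_zero,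
      rising_eq_zero (x := 1 + c - (t' + q) / 2) (by omega) (by omega)]
    simp
  · omega
  · omega
  · rw [substAlpha_xiP_of_le_neg c ht.1 htq, substAlpha_xiP_of_le_neg c ht'.1 htq',
      show 1 + c - (t + q) / 2 = 1 - q - -((t' + q) / 2) by omega,
      show 1 + c - (t' + q) / 2 = 1 - q - -((t + q) / 2) by omega, rising_one_sub_sub,
      rising_one_sub_sub]
    ring_nf

def IsGKM (m : ℤ) (f : ℤ → Rpoly) : Prop :=
  ∀ ⦃t t' c : ℤ⦄, -m ≤ t ∧ t ≤ m → -m ≤ t' ∧ t' ≤ m → t + t' = 2 * c + 1 →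
    edgeLabel c ∣ f t - f t'

lemma isGKM_xiP (m : ℤ) (q : ℕ) : IsGKM m (xiP m q) := fun _ _ _ ht ht' hc =>
  edgeLabel_dvd_sub_of_substAlpha_eq (substAlpha_xiP_eq_of_add_eq ht ht' hc)

def alphaReflection : Rpoly →ₐ[ℚ] Rpoly := aeval ![-va - vd, vd]

lemma alphaReflection_C (a : ℚ) : alphaReflection (MvPolynomial.C a) = MvPolynomial.C a :=
  alphaReflection.commutes a

lemma alphaReflection_va : alphaReflection va = -va - vd := by
  simp [alphaReflection, va]

lemma alphaReflection_vd : alphaReflection vd = vd := by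
  simp [alphaReflection, vd]

lemma alphaReflection_Ppos (a b : ℤ) : alphaReflection (Ppos a b) = Pneg (a - 1) (b - 1) := by
  rw [Ppos, map_prod, Pneg,
    show Icc (a - 1) (b - 1) = (Icc a b).map (addRightEmbedding (-1)) by simp [sub_eq_add_neg],
    prod_map]
  refine prod_congr rfl fun k _ => ?_
  simp only [map_add, map_mul, map_intCast, alphaReflection_va, alphaReflection_vd,
    addRightEmbedding_apply]
  push_cast
  ring

lemma alphaReflection_Pneg (a b : ℤ) : alphaReflection (Pneg a b) = Ppos (a + 1) (b + 1) := by
  rw [Pneg, map_prod, Ppos, ← map_add_right_Icc a b 1, prod_map]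
  refine prod_congr rfl fun k _ => ?_
  simp only [map_add, map_neg, map_mul, map_intCast, alphaReflection_va, alphaReflection_vd,
    addRightEmbedding_apply]
  push_cast
  ring

lemma alphaReflection_edgeLabel (c : ℤ) : alphaReflection (edgeLabel (-c - 1)) = -edgeLabel c := by
  simp only [edgeLabel, map_sub, map_mul, map_intCast, alphaReflection_va, alphaReflection_vd]
  push_cast
  ring

lemma xiM_eq_alphaReflection_xiP (m : ℤ) (q : ℕ) (t : ℤ) :
    xiM m q t = alphaReflection (xiP m q (-t)) := by
  unfold xiM xiP
  push_cast
  simp only [neg_neg]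
  split_ifs <;> try omega
  · rw [map_mul, alphaReflection_C, alphaReflection_Ppos]
    ring_nf
  · rw [map_mul, alphaReflection_C, alphaReflection_Pneg]
    ring_nf
  · rw [map_zero]

lemma isGKM_xiM (m : ℤ) (q : ℕ) : IsGKM m (xiM m q) := by
  intro t t' c ht ht' hc
  have h := isGKM_xiP m q (t := -t) (t' := -t') (c := -c - 1) ⟨by omega, by omega⟩
    ⟨by omega, by omega⟩ (by omega)
  rw [xiM_eq_alphaReflection_xiP, xiM_eq_alphaReflection_xiP, ← map_sub, ← neg_dvd,
    ← alphaReflection_edgeLabel]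
  exact map_dvd alphaReflection h

lemma isGKM_one (m : ℤ) : IsGKM m 1 := fun _ _ _ _ _ _ => by simp

lemma IsGKM.mul {m : ℤ} {f g : ℤ → Rpoly} (hf : IsGKM m f) (hg : IsGKM m g) : IsGKM m (f * g) := by
  intro t t' c ht ht' hc
  rw [Pi.mul_apply, Pi.mul_apply, show f t * g t - f t' * g t' =
    f t * (g t - g t') + g t' * (f t - f t') by ring]
  exact dvd_add (dvd_mul_of_dvd_right (hg ht ht' hc) _) (dvd_mul_of_dvd_right (hf ht ht' hc) _)

lemma IsGKM.sub_smul {m : ℤ} {f g : ℤ → Rpoly} (hf : IsGKM m f) (hg : IsGKM m g) (a : Rpoly) :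
    IsGKM m (f - a • g) := by
  intro t t' c ht ht' hc
  simp only [Pi.sub_apply, Pi.smul_apply, smul_eq_mul]
  rw [show f t - a * g t - (f t' - a * g t') = (f t - f t') - a * (g t - g t') by ring]
  exact dvd_sub (hf ht ht' hc) (dvd_mul_of_dvd_right (hg ht ht' hc) _)

abbrev intSubring : Subring Rpoly := (MvPolynomial.map (σ := Fin 2) (Int.castRingHom ℚ)).range

lemma va_mem_intSubring : va ∈ intSubring := ⟨X 0, map_X _ _⟩

lemma vd_mem_intSubring : vd ∈ intSubring := ⟨X 1, map_X _ _⟩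

lemma C_intCast_mem_intSubring (k : ℤ) : MvPolynomial.C (k : ℚ) ∈ intSubring := by
  rw [map_intCast]
  exact intCast_mem _ k

lemma C_B_mem_intSubring (n : ℤ) (q : ℕ) : MvPolynomial.C (B n q) ∈ intSubring := by
  rw [B, map_natCast]
  exact natCast_mem _ _

lemma Pneg_mem_intSubring (a b : ℤ) : Pneg a b ∈ intSubring :=
  prod_mem fun k _ => add_mem (neg_mem va_mem_intSubring)
    (mul_mem (C_intCast_mem_intSubring k) vd_mem_intSubring)

lemma Ppos_mem_intSubring (a b : ℤ) : Ppos a b ∈ intSubring :=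
  prod_mem fun k _ => add_mem va_mem_intSubring
    (mul_mem (C_intCast_mem_intSubring k) vd_mem_intSubring)

lemma xiP_mem_intSubring (m : ℤ) (q : ℕ) (t : ℤ) : xiP m q t ∈ intSubring := by
  unfold xiP
  split_ifs
  · exact mul_mem (C_B_mem_intSubring _ _) (Pneg_mem_intSubring _ _)
  · exact mul_mem (C_B_mem_intSubring _ _) (Ppos_mem_intSubring _ _)
  · exact zero_mem _

lemma xiM_mem_intSubring (m : ℤ) (q : ℕ) (t : ℤ) : xiM m q t ∈ intSubring := by
  unfold xiM
  split_ifs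
  · exact mul_mem (C_B_mem_intSubring _ _) (Pneg_mem_intSubring _ _)
  · exact mul_mem (C_B_mem_intSubring _ _) (Ppos_mem_intSubring _ _)
  · exact zero_mem _

lemma finSuccEquiv_edgeLabel (c : ℤ) :
    finSuccEquiv ℚ 1 (edgeLabel c) =
      Polynomial.X - Polynomial.C (MvPolynomial.C (c : ℚ) * X 0) := by
  rw [edgeLabel, va, vd, map_sub, map_mul, finSuccEquiv_X_zero,
    show (1 : Fin 2) = (0 : Fin 1).succ from rfl, finSuccEquiv_X_succ]
  simp

lemma edgeLabel_prime (c : ℤ) : Prime (edgeLabel c) := by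
  rw [← MulEquiv.prime_iff (finSuccEquiv ℚ 1), finSuccEquiv_edgeLabel]
  exact Polynomial.prime_X_sub_C _

lemma eq_of_edgeLabel_dvd_edgeLabel {c c' : ℤ} (h : edgeLabel c ∣ edgeLabel c') : c = c' := by
  obtain ⟨r, hr⟩ := h
  have hcc : (c : ℚ) = c' := by
    simpa [edgeLabel, va, vd, sub_eq_zero] using congrArg (MvPolynomial.eval ![(c : ℚ), 1]) hr
  exact_mod_cast hcc

lemma prod_edgeLabel_dvd {s : Finset ℤ} {g : Rpoly} (h : ∀ c ∈ s, edgeLabel c ∣ g) :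
    ∏ c ∈ s, edgeLabel c ∣ g :=
  prod_dvd_of_isRelPrime (fun _ _ _ _ hne =>
    (edgeLabel_prime _).irreducible.isRelPrime_iff_not_dvd.mpr
      fun hdvd => hne (eq_of_edgeLabel_dvd_edgeLabel hdvd)) h

lemma finSuccEquiv_map_intCast (p : MvPolynomial (Fin 2) ℤ) :
    finSuccEquiv ℚ 1 (map (Int.castRingHom ℚ) p) =
      (finSuccEquiv ℤ 1 p).map (map (Int.castRingHom ℚ)) := by
  have h : (finSuccEquiv ℚ 1).toRingHom.comp (map (Int.castRingHom ℚ)) =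
      (Polynomial.mapRingHom (map (Int.castRingHom ℚ))).comp (finSuccEquiv ℤ 1).toRingHom := by
    refine MvPolynomial.ringHom_ext (fun a => ?_) (fun i => ?_)
    · simp
    · refine Fin.cases ?_ (fun j => ?_) i
      · simp [finSuccEquiv_X_zero]
      · simp [finSuccEquiv_X_succ]
  exact congrArg (fun φ : MvPolynomial (Fin 2) ℤ →+* _ => φ p) h

/-- Gauss's lemma: the product is monic in `α` over `ℤ[δ]`, so dividing by it creates no
denominators. -/
lemma exists_mem_intSubring_eq_prod_edgeLabel_mul {s : Finset ℤ} {g : Rpoly}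
    (hg : g ∈ intSubring) (hdvd : ∏ c ∈ s, edgeLabel c ∣ g) :
    ∃ b ∈ intSubring, g = (∏ c ∈ s, edgeLabel c) * b := by
  obtain ⟨gZ, rfl⟩ := hg
  set D : Polynomial (MvPolynomial (Fin 1) ℤ) :=
    ∏ c ∈ s, (Polynomial.X - Polynomial.C (MvPolynomial.C c * X 0))
  have hD : finSuccEquiv ℚ 1 (∏ c ∈ s, edgeLabel c) = D.map (map (Int.castRingHom ℚ)) := by
    simp [D, Polynomial.map_prod, finSuccEquiv_edgeLabel]
  have hDZ : D ∣ finSuccEquiv ℤ 1 gZ := by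
    refine (Polynomial.map_dvd_map (map (Int.castRingHom ℚ)) (map_injective _ Int.cast_injective)
      (Polynomial.monic_prod_of_monic _ _ fun c _ => Polynomial.monic_X_sub_C _)).mp ?_
    rw [← hD, ← finSuccEquiv_map_intCast]
    exact map_dvd _ hdvd
  obtain ⟨bZ, hbZ⟩ := hDZ
  refine ⟨map (Int.castRingHom ℚ) ((finSuccEquiv ℤ 1).symm bZ), ⟨_, rfl⟩, ?_⟩
  apply (finSuccEquiv ℚ 1).injective
  rw [map_mul, hD, finSuccEquiv_map_intCast, finSuccEquiv_map_intCast, hbZ, Polynomial.map_mul,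
    AlgEquiv.apply_symm_apply]

/-- Position of the vertex `t` in the order `0, 1, -1, 2, -2, …`. -/
def vertexIndex (t : ℤ) : ℤ := max (2 * t - 1) (-2 * t)

def VanishesBelow (m n : ℤ) (f : ℤ → Rpoly) : Prop :=
  ∀ t, -m ≤ t ∧ t ≤ m → vertexIndex t < n → f t = 0

lemma xiM_eq_zero {m : ℤ} {q : ℕ} {t : ℤ} (h₁ : -q + 1 ≤ t) (h₂ : t ≤ q) : xiM m q t = 0 := by
  rw [xiM_eq_alphaReflection_xiP, xiP_eq_zero (by omega) (by omega), map_zero]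

lemma vanishesBelow_xiP (m : ℤ) (q : ℕ) : VanishesBelow m (2 * q - 1) (xiP m q) :=
  fun _ _ ht => by unfold vertexIndex at ht; exact xiP_eq_zero (by omega) (by omega)

lemma vanishesBelow_xiM (m : ℤ) (q : ℕ) : VanishesBelow m (2 * q) (xiM m q) :=
  fun _ _ ht => by unfold vertexIndex at ht; exact xiM_eq_zero (by omega) (by omega)

lemma VanishesBelow.sub_smul {m n : ℤ} {f ξ : ℤ → Rpoly} (hf : VanishesBelow m n f)
    (hξ : VanishesBelow m n ξ) {v : ℤ} {a : Rpoly} (hv : -m ≤ v ∧ v ≤ m) (hvn : vertexIndex v = n)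
    (hfv : f v = a * ξ v) : VanishesBelow m (n + 1) (f - a • ξ) := by
  intro t ht hidx
  simp only [Pi.sub_apply, Pi.smul_apply, smul_eq_mul]
  rcases (Int.lt_add_one_iff.mp hidx).lt_or_eq with hlt | heq
  · rw [hf t ht hlt, hξ t ht hlt, mul_zero, sub_zero]
  · obtain rfl : t = v := by unfold vertexIndex at heq hvn; omega
    rw [hfv, sub_self]

lemma edgeLabel_dvd_of_vanishesBelow {m n : ℤ} {f : ℤ → Rpoly} (hG : IsGKM m f)
    (hvan : VanishesBelow m n f) {t t' c : ℤ} (ht : -m ≤ t ∧ t ≤ m) (ht' : -m ≤ t' ∧ t' ≤ m)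
    (hidx : vertexIndex t' < n) (hc : t + t' = 2 * c + 1) : edgeLabel c ∣ f t := by
  simpa [hvan t' ht' hidx] using hG ht ht' hc

lemma xiP_self {m : ℤ} {q : ℕ} (hqm : q ≤ m) :
    xiP m q q = (-1) ^ q * ∏ c ∈ Icc 0 ((q : ℤ) - 1), edgeLabel c := by
  have hceil : ⌈(((q : ℤ) : ℚ) - q + 1) / 2⌉ = 1 := by norm_num [Int.ceil_eq_iff]
  rw [xiP, if_pos ⟨le_rfl, hqm⟩, hceil, B, show (1 + q - 1 : ℤ).toNat = q by omega,
    Nat.choose_self, Nat.cast_one, map_one, one_mul, Pneg,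
    show (1 - 1 : ℤ) = 0 by rfl, show (1 + q - 2 : ℤ) = q - 1 by ring]
  have hcard : #(Icc 0 ((q : ℤ) - 1)) = q := by simp
  trans ∏ c ∈ Icc 0 ((q : ℤ) - 1), -edgeLabel c
  · exact prod_congr rfl fun k _ => by rw [edgeLabel]; ring
  · rw [prod_neg, hcard]

lemma xiM_neg_self {m : ℤ} {q : ℕ} (hqm : q ≤ m) :
    xiM m q (-q) = ∏ c ∈ Icc (-(q : ℤ)) (-1), edgeLabel c := by
  have hceil : ⌈(-((-(q : ℤ) : ℤ) : ℚ) - q + 1) / 2⌉ = 1 := by norm_num [Int.ceil_eq_iff]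
  rw [xiM, if_neg (by omega), if_pos ⟨by omega, le_rfl⟩, hceil, B,
    show (1 + q - 1 : ℤ).toNat = q by omega, Nat.choose_self, Nat.cast_one, map_one, one_mul, Ppos]
  refine prod_nbij' (fun k => -k) (fun k => -k) (fun k hk => ?_) (fun k hk => ?_)
    (fun k _ => neg_neg k) (fun k _ => neg_neg k) (fun k _ => by simp [edgeLabel])
  all_goals rw [mem_Icc] at hk ⊢; omega

lemma exists_eq_mul_xiP_self {m : ℤ} {q : ℕ} {f : ℤ → Rpoly} (hqm : q ≤ m)
    (hZ : ∀ t, f t ∈ intSubring) (hG : IsGKM m f) (hvan : VanishesBelow m (2 * q - 1) f) :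
    ∃ a ∈ intSubring, f q = a * xiP m q q := by
  have hdvd : ∏ c ∈ Icc 0 ((q : ℤ) - 1), edgeLabel c ∣ f q := prod_edgeLabel_dvd fun c hc => by
    rw [mem_Icc] at hc
    exact edgeLabel_dvd_of_vanishesBelow (t' := 2 * c + 1 - q) hG hvan ⟨by omega, hqm⟩
      ⟨by omega, by omega⟩ (by unfold vertexIndex; omega) (by ring)
  obtain ⟨b, hb, hfb⟩ := exists_mem_intSubring_eq_prod_edgeLabel_mul (hZ q) hdvd
  refine ⟨(-1) ^ q * b, mul_mem (pow_mem (neg_mem (one_mem _)) q) hb, ?_⟩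
  rw [xiP_self hqm, hfb, mul_mul_mul_comm, ← mul_pow, neg_one_mul, neg_neg, one_pow, one_mul,
    mul_comm]

lemma exists_eq_mul_xiM_neg_self {m : ℤ} {q : ℕ} {f : ℤ → Rpoly} (hqm : q ≤ m)
    (hZ : ∀ t, f t ∈ intSubring) (hG : IsGKM m f) (hvan : VanishesBelow m (2 * q) f) :
    ∃ a ∈ intSubring, f (-q) = a * xiM m q (-q) := by
  have hdvd : ∏ c ∈ Icc (-(q : ℤ)) (-1), edgeLabel c ∣ f (-q) := prod_edgeLabel_dvd fun c hc => by
    rw [mem_Icc] at hc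
    exact edgeLabel_dvd_of_vanishesBelow (t' := 2 * c + 1 + q) hG hvan ⟨by omega, by omega⟩
      ⟨by omega, by omega⟩ (by unfold vertexIndex; omega) (by ring)
  obtain ⟨b, hb, hfb⟩ := exists_mem_intSubring_eq_prod_edgeLabel_mul (hZ (-q)) hdvd
  exact ⟨b, hb, by rw [xiM_neg_self hqm, hfb, mul_comm]⟩

def IsIntCombination (m : ℕ) (f : ℤ → Rpoly) : Prop :=
  ∃ (h0 : Rpoly) (h1 h2 : ℕ → Rpoly), h0 ∈ intSubring ∧
    (∀ q : ℕ, 1 ≤ q → q ≤ m → h1 q ∈ intSubring ∧ h2 q ∈ intSubring) ∧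
    ∀ t : ℤ, -(m : ℤ) ≤ t → t ≤ (m : ℤ) →
      f t = h0 + ∑ q ∈ Finset.Icc 1 m, (h1 q * xiP m q t + h2 q * xiM m q t)

lemma isIntCombination_of_eqOn_zero {m : ℕ} {f : ℤ → Rpoly}
    (hf : ∀ t, -(m : ℤ) ≤ t ∧ t ≤ m → f t = 0) : IsIntCombination m f :=
  ⟨0, 0, 0, zero_mem _, fun _ _ _ => ⟨zero_mem _, zero_mem _⟩,
    fun t h₁ h₂ => by simp [hf t ⟨h₁, h₂⟩]⟩

lemma IsIntCombination.of_sub_smul_one {m : ℕ} {f : ℤ → Rpoly} {a : Rpoly}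
    (h : IsIntCombination m (f - a • 1)) (ha : a ∈ intSubring) : IsIntCombination m f := by
  obtain ⟨h0, h1, h2, h0Z, hZ, hf⟩ := h
  refine ⟨h0 + a, h1, h2, add_mem h0Z ha, hZ, fun t h₁ h₂ => ?_⟩
  have := hf t h₁ h₂
  simp only [Pi.sub_apply, Pi.smul_apply, Pi.one_apply, smul_eq_mul, mul_one] at this
  rw [add_right_comm, ← this, sub_add_cancel]

lemma IsIntCombination.of_sub_smul_xiP {m q : ℕ} {f : ℤ → Rpoly} {a : Rpoly}
    (h : IsIntCombination m (f - a • xiP m q)) (ha : a ∈ intSubring) (hq : 1 ≤ q) (hqm : q ≤ m) :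
    IsIntCombination m f := by
  obtain ⟨h0, h1, h2, h0Z, hZ, hf⟩ := h
  refine ⟨h0, h1 + Pi.single q a, h2, h0Z, fun i hi hi' => ⟨add_mem (hZ i hi hi').1 ?_,
    (hZ i hi hi').2⟩, fun t h₁ h₂ => ?_⟩
  · rcases eq_or_ne i q with rfl | hne
    · simpa using ha
    · simp [hne]
  · have := hf t h₁ h₂
    simp only [Pi.sub_apply, Pi.smul_apply, smul_eq_mul] at this
    simp only [Pi.add_apply, Pi.single_apply, add_mul, ite_mul, zero_mul, sum_add_distrib,
      sum_ite_eq', mem_Icc, hq, hqm, and_self, ↓reduceIte]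
    rw [sum_add_distrib] at this
    linear_combination this

lemma IsIntCombination.of_sub_smul_xiM {m q : ℕ} {f : ℤ → Rpoly} {a : Rpoly}
    (h : IsIntCombination m (f - a • xiM m q)) (ha : a ∈ intSubring) (hq : 1 ≤ q) (hqm : q ≤ m) :
    IsIntCombination m f := by
  obtain ⟨h0, h1, h2, h0Z, hZ, hf⟩ := h
  refine ⟨h0, h1, h2 + Pi.single q a, h0Z, fun i hi hi' => ⟨(hZ i hi hi').1,
    add_mem (hZ i hi hi').2 ?_⟩, fun t h₁ h₂ => ?_⟩
  · rcases eq_or_ne i q with rfl | hne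
    · simpa using ha
    · simp [hne]
  · have := hf t h₁ h₂
    simp only [Pi.sub_apply, Pi.smul_apply, smul_eq_mul] at this
    simp only [Pi.add_apply, Pi.single_apply, add_mul, ite_mul, zero_mul, sum_add_distrib,
      sum_ite_eq', mem_Icc, hq, hqm, and_self, ↓reduceIte]
    rw [sum_add_distrib] at this
    linear_combination this

lemma isIntCombination_of_vanishesBelow {m n : ℕ} {f : ℤ → Rpoly} (hn : n ≤ 2 * m + 1)
    (hZ : ∀ t, f t ∈ intSubring) (hG : IsGKM m f) (hvan : VanishesBelow m n f) :
    IsIntCombination m f := by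
  obtain ⟨d, hd⟩ := Nat.exists_eq_add_of_le hn
  induction d generalizing n f with
  | zero => exact isIntCombination_of_eqOn_zero fun t ht => hvan t ht (by unfold vertexIndex; omega)
  | succ d ih =>
    have peel : ∀ (a : Rpoly) (ξ : ℤ → Rpoly) (v : ℤ), a ∈ intSubring → (∀ t, ξ t ∈ intSubring) →
        IsGKM m ξ → VanishesBelow m n ξ → -(m : ℤ) ≤ v ∧ v ≤ m → vertexIndex v = n →
        f v = a * ξ v → IsIntCombination m (f - a • ξ) :=
      fun a ξ v ha hξZ hξG hξvan hv hvn hfv =>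
        ih (n := n + 1) (by omega) (fun t => sub_mem (hZ t) (mul_mem ha (hξZ t)))
          (hG.sub_smul hξG a) (by exact_mod_cast hvan.sub_smul hξvan hv hvn hfv) (by omega)
    rcases Nat.eq_zero_or_pos n with rfl | hpos
    · refine (peel (f 0) 1 0 (hZ 0) (fun _ => one_mem _) (isGKM_one _) ?_ ⟨by omega, by omega⟩
        (by simp [vertexIndex]) (mul_one _).symm).of_sub_smul_one (hZ 0)
      intro t _ ht
      unfold vertexIndex at ht
      omega
    obtain ⟨q, hq, hnq⟩ | ⟨q, hq, hnq⟩ :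
        (∃ q : ℕ, 1 ≤ q ∧ (n : ℤ) = 2 * q - 1) ∨ ∃ q : ℕ, 1 ≤ q ∧ (n : ℤ) = 2 * q := by
      rcases Nat.even_or_odd' n with ⟨k, rfl | rfl⟩
      exacts [Or.inr ⟨k, by omega, by push_cast; ring⟩,
        Or.inl ⟨k + 1, by omega, by push_cast; ring⟩]
    · obtain ⟨a, ha, hfa⟩ := exists_eq_mul_xiP_self (q := q) (by omega) hZ hG (hnq ▸ hvan)
      exact (peel a _ q ha (xiP_mem_intSubring _ _) (isGKM_xiP _ _) (hnq ▸ vanishesBelow_xiP _ q)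
        ⟨by omega, by omega⟩ (by unfold vertexIndex; omega) hfa).of_sub_smul_xiP ha hq (by omega)
    · obtain ⟨a, ha, hfa⟩ := exists_eq_mul_xiM_neg_self (q := q) (by omega) hZ hG (hnq ▸ hvan)
      exact (peel a _ (-q) ha (xiM_mem_intSubring _ _) (isGKM_xiM _ _) (hnq ▸ vanishesBelow_xiM _ q)
        ⟨by omega, by omega⟩ (by unfold vertexIndex; omega) hfa).of_sub_smul_xiM ha hq (by omega)

theorem isIntCombination_of_isGKM {m : ℕ} {f : ℤ → Rpoly} (hZ : ∀ t, f t ∈ intSubring)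
    (hG : IsGKM m f) : IsIntCombination m f :=
  isIntCombination_of_vanishesBelow (n := 0) (by omega) hZ hG
    fun t _ ht => by unfold vertexIndex at ht; omega

lemma mem_intSubring_and_isGKM_of_basis {m : ℕ} {f : ℤ → Rpoly}
    (hf : f = (fun _ => 1) ∨ (∃ q : ℕ, 1 ≤ q ∧ q ≤ m ∧ f = xiP m q) ∨
      (∃ q : ℕ, 1 ≤ q ∧ q ≤ m ∧ f = xiM m q)) :
    (∀ t, f t ∈ intSubring) ∧ IsGKM m f := by
  rcases hf with rfl | ⟨q, -, -, rfl⟩ | ⟨q, -, -, rfl⟩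
  · exact ⟨fun _ => one_mem _, isGKM_one _⟩
  · exact ⟨xiP_mem_intSubring _ _, isGKM_xiP _ _⟩
  · exact ⟨xiM_mem_intSubring _ _, isGKM_xiM _ _⟩

theorem statement19_general (m : ℕ) (fa fb : ℤ → Rpoly)
    (ha : fa = (fun _ => 1) ∨ (∃ q : ℕ, 1 ≤ q ∧ q ≤ m ∧ fa = xiP m q) ∨
      (∃ q : ℕ, 1 ≤ q ∧ q ≤ m ∧ fa = xiM m q))
    (hb : fb = (fun _ => 1) ∨ (∃ q : ℕ, 1 ≤ q ∧ q ≤ m ∧ fb = xiP m q) ∨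
      (∃ q : ℕ, 1 ≤ q ∧ q ≤ m ∧ fb = xiM m q)) :
    ∃ (h0 : Rpoly) (h1 h2 : ℕ → Rpoly),
      h0 ∈ (MvPolynomial.map (σ := Fin 2) (Int.castRingHom ℚ)).range ∧
      (∀ q : ℕ, 1 ≤ q → q ≤ m →
        h1 q ∈ (MvPolynomial.map (σ := Fin 2) (Int.castRingHom ℚ)).range ∧
        h2 q ∈ (MvPolynomial.map (σ := Fin 2) (Int.castRingHom ℚ)).range) ∧
      ∀ t : ℤ, -(m : ℤ) ≤ t → t ≤ (m : ℤ) →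
        fa t * fb t = h0 + ∑ q ∈ Finset.Icc 1 m, (h1 q * xiP m q t + h2 q * xiM m q t) := by
  obtain ⟨haZ, haG⟩ := mem_intSubring_and_isGKM_of_basis ha
  obtain ⟨hbZ, hbG⟩ := mem_intSubring_and_isGKM_of_basis hb
  exact isIntCombination_of_isGKM (f := fa * fb) (fun t => mul_mem (haZ t) (hbZ t)) (haG.mul hbG)

/-- the structure constants of the Knutson–Tao basis lie in `ℤ[α,δ]`. -/
theorem statement19 (m : ℕ) (hm : 1 ≤ m) (fa fb : ℤ → Rpoly)
    (ha : fa = (fun _ => 1) ∨ (∃ q : ℕ, 1 ≤ q ∧ q ≤ m ∧ fa = xiP m q) ∨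
      (∃ q : ℕ, 1 ≤ q ∧ q ≤ m ∧ fa = xiM m q))
    (hb : fb = (fun _ => 1) ∨ (∃ q : ℕ, 1 ≤ q ∧ q ≤ m ∧ fb = xiP m q) ∨
      (∃ q : ℕ, 1 ≤ q ∧ q ≤ m ∧ fb = xiM m q)) :
    ∃ (h0 : Rpoly) (h1 h2 : ℕ → Rpoly),
      h0 ∈ (MvPolynomial.map (σ := Fin 2) (Int.castRingHom ℚ)).range ∧
      (∀ q : ℕ, 1 ≤ q → q ≤ m →
        h1 q ∈ (MvPolynomial.map (σ := Fin 2) (Int.castRingHom ℚ)).range ∧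
        h2 q ∈ (MvPolynomial.map (σ := Fin 2) (Int.castRingHom ℚ)).range) ∧
      ∀ t : ℤ, -(m : ℤ) ≤ t → t ≤ (m : ℤ) →
        fa t * fb t = h0 + ∑ q ∈ Finset.Icc 1 m, (h1 q * xiP m q t + h2 q * xiM m q t) :=
  statement19_general m fa fb ha hb
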